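/- Let (X, d) be a metric space with asdim(X, d) ≤ n. Then there exists a metric D on the set X such that (X, D) satisfies property (N2)_n and the identity map id: (X, d) → (X, D) is a coarse equivalence. -/
import Mathlib


/-- The distance between two subsets of a metric space:
`d(A, B) = inf {d(a, b) : a ∈ A, b ∈ B}`. -/
noncomputable def setDist {X : Type*} [MetricSpace X] (A B : Set X) : ℝ :=
  sInf {r : ℝ | ∃ a ∈ A, ∃ b ∈ B, dist a b = r}

/-- A family `𝒰` of subsets is `r`-disjoint if any two distinct members `U, V`
satisfy `d(U, V) > r`. -/
def RDisjoint {X : Type*} [MetricSpace X] (r : ℝ) (𝒰 : Set (Set X)) : Prop :=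
  ∀ U ∈ 𝒰, ∀ V ∈ 𝒰, U ≠ V → r < setDist U V

/-- A family of subsets covers `X`. -/
def IsCover {X : Type*} (𝒰 : Set (Set X)) : Prop :=
  ∀ x : X, ∃ U ∈ 𝒰, x ∈ U

/-- A family is uniformly bounded if the diameters of its members have a common bound. -/
def UnifBounded {X : Type*} [MetricSpace X] (𝒰 : Set (Set X)) : Prop :=
  ∃ M : ℝ, ∀ U ∈ 𝒰, ∀ x ∈ U, ∀ y ∈ U, dist x y ≤ M

/-- `asdim(X, d) ≤ n`: for every `r > 0` there is a uniformly bounded covering of `X`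
splitting into `n + 1` families, each of which is `r`-disjoint. -/
def AsdimLE (n : ℕ) (X : Type*) [MetricSpace X] : Prop :=
  ∀ r : ℝ, 0 < r → ∃ 𝒰 : Fin (n + 1) → Set (Set X),
    IsCover (⋃ i, 𝒰 i) ∧ UnifBounded (⋃ i, 𝒰 i) ∧ ∀ i, RDisjoint r (𝒰 i)

/-- `f` is a coarse map with respect to the distance functions `dX`, `dY`:
for every `δ > 0` there is `ε > 0` such that `dX a b ≤ δ` implies `dY (f a) (f b) ≤ ε`. -/
def CoarseWith {X Y : Type*} (dX : X → X → ℝ) (dY : Y → Y → ℝ) (f : X → Y) : Prop :=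
  ∀ δ : ℝ, 0 < δ → ∃ ε : ℝ, 0 < ε ∧ ∀ a b : X, dX a b ≤ δ → dY (f a) (f b) ≤ ε

/-- Property `(N2)_n` for a distance function `D`: for every `x, y₁, …, y_{n+2}` there
are `i ≠ j` with `D(yᵢ, yⱼ) ≤ D(x, yᵢ)`. -/
def N2Prop {Y : Type*} (n : ℕ) (D : Y → Y → ℝ) : Prop :=
  ∀ (x : Y) (y : Fin (n + 2) → Y), ∃ i j : Fin (n + 2), i ≠ j ∧ D (y i) (y j) ≤ D x (y i)

lemma setDist_le_dist {X : Type*} [MetricSpace X] {A B : Set X} {a b : X}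
    (ha : a ∈ A) (hb : b ∈ B) : setDist A B ≤ dist a b := by
  apply csInf_le
  · refine ⟨0, ?_⟩
    rintro x ⟨a', _, b', _, rfl⟩
    exact dist_nonneg
  · exact ⟨a, ha, b, hb, rfl⟩

/-- Thickened covers: `n+1` families, each `r`-disjoint (pointwise), uniformly bounded,
such that any two points at distance `≤ r` lie in a common member. -/
lemma aux_thick {X : Type*} [MetricSpace X] {n : ℕ} (h : AsdimLE n X) {r : ℝ} (hr : 0 < r) :
    ∃ (V : Fin (n + 1) → Set (Set X)) (M : ℝ), 0 ≤ M ∧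
      (∀ c, ∀ A ∈ V c, ∀ B ∈ V c, A ≠ B → ∀ a ∈ A, ∀ b ∈ B, r < dist a b) ∧
      (∀ c, ∀ A ∈ V c, ∀ a ∈ A, ∀ b ∈ A, dist a b ≤ M) ∧
      (∀ x y : X, dist x y ≤ r → ∃ c, ∃ A ∈ V c, x ∈ A ∧ y ∈ A) := by
  obtain ⟨𝒰, hcov, ⟨M0, hM0⟩, hdisj⟩ := h (4 * r) (by linarith)
  refine ⟨fun c => (fun A => {z : X | ∃ u ∈ A, dist z u ≤ r}) '' 𝒰 c,
    max M0 0 + 2 * r, by positivity, ?_, ?_, ?_⟩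
  · rintro c A ⟨A0, hA0, rfl⟩ B ⟨B0, hB0, rfl⟩ hAB a ⟨u, hu, hau⟩ b ⟨v, hv, hbv⟩
    have hA0B0 : A0 ≠ B0 := by rintro rfl; exact hAB rfl
    have h4 : 4 * r < dist u v :=
      lt_of_lt_of_le (hdisj c A0 hA0 B0 hB0 hA0B0) (setDist_le_dist hu hv)
    have := dist_triangle4 u a b v
    have h1 : dist u a ≤ r := by rwa [dist_comm]
    linarith
  · rintro c A ⟨A0, hA0, rfl⟩ a ⟨u, hu, hau⟩ b ⟨v, hv, hbv⟩
    have huv : dist u v ≤ M0 :=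
      hM0 A0 (Set.mem_iUnion.mpr ⟨c, hA0⟩) u hu v hv
    have := dist_triangle4 a u v b
    have h2 : dist v b ≤ r := by rwa [dist_comm]
    have : dist a b ≤ r + M0 + r := by
      have := dist_triangle4 a u v b; linarith
    have : M0 ≤ max M0 0 := le_max_left _ _
    linarith
  · intro x y hxy
    obtain ⟨A0, hA0, hx⟩ := hcov x
    obtain ⟨c, hc⟩ := Set.mem_iUnion.mp hA0
    exact ⟨c, _, ⟨A0, hc, rfl⟩, ⟨x, hx, by simpa using hr.le⟩, ⟨x, hx, by rwa [dist_comm]⟩⟩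

structure TowerLvl (X : Type*) (n : ℕ) where
  G : Fin (n + 1) → Set (Set X)
  r : ℝ
  M : ℝ

def TowerInv {X : Type*} [MetricSpace X] {n : ℕ} (L : TowerLvl X n) : Prop :=
  0 < L.r ∧ 0 ≤ L.M ∧
  (∀ c, ∀ A ∈ L.G c, ∀ B ∈ L.G c, A ≠ B → ∀ z, z ∈ A → z ∈ B → False) ∧
  (∀ c, ∀ A ∈ L.G c, ∀ a ∈ A, ∀ b ∈ A, dist a b ≤ L.M) ∧
  (∀ x y : X, dist x y ≤ L.r → ∃ c, ∃ A ∈ L.G c, x ∈ A ∧ y ∈ A)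

def TowerLink {X : Type*} [MetricSpace X] {n : ℕ} (s t : TowerLvl X n) : Prop :=
  (∀ c, ∀ A ∈ s.G c, ∃ B ∈ t.G c, A ⊆ B) ∧ 2 * s.M < t.r ∧ s.M ≤ t.M ∧ s.r + 1 ≤ t.r

lemma tower_step {X : Type*} [MetricSpace X] {n : ℕ} (h : AsdimLE n X)
    (s : TowerLvl X n) (hs : TowerInv s) :
    ∃ t : TowerLvl X n, TowerInv t ∧ TowerLink s t := by
  obtain ⟨hr, hM, hdisj, hbdd, hthick⟩ := hs
  have hr' : (0:ℝ) < 2 * s.M + s.r + 1 := by linarith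
  obtain ⟨V, M0, hM0, hsep, hVbdd, hVthick⟩ := aux_thick h hr'
  set r' : ℝ := 2 * s.M + s.r + 1 with hr'def
  -- the enlarged sets
  set Gt : Fin (n + 1) → Set (Set X) := fun c =>
    ((fun W => W ∪ ⋃₀ {A | A ∈ s.G c ∧ (A ∩ W).Nonempty}) '' V c) ∪
      {A | A ∈ s.G c ∧ ∀ W ∈ V c, ¬(A ∩ W).Nonempty} with hGt
  -- every point of an enlarged set is within s.M of the core
  have near : ∀ c (W : Set X), W ∈ V c →
      ∀ z ∈ W ∪ ⋃₀ {A | A ∈ s.G c ∧ (A ∩ W).Nonempty}, ∃ w ∈ W, dist z w ≤ s.M := by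
    intro c W _ z hz
    rcases hz with hz | hz
    · exact ⟨z, hz, by simp [hM]⟩
    · obtain ⟨A, ⟨hA, w, hwA, hwW⟩, hzA⟩ := hz
      exact ⟨w, hwW, hbdd c A hA z hzA w hwA⟩
  refine ⟨⟨Gt, r', M0 + 3 * s.M⟩, ⟨hr', by simp only; linarith, ?_, ?_, ?_⟩, ?_,
    by simp only; linarith, by simp only; linarith, by simp only [hr'def]; linarith⟩
  · -- pairwise disjoint within each color
    rintro c A hA B hB hAB z hzA hzB
    rcases hA with ⟨W, hW, rfl⟩ | ⟨hA, horph⟩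
    · rcases hB with ⟨W', hW', rfl⟩ | ⟨hB, horph'⟩
      · have hWW' : W ≠ W' := by rintro rfl; exact hAB rfl
        obtain ⟨w, hwW, hzw⟩ := near c W hW z hzA
        obtain ⟨w', hw'W', hzw'⟩ := near c W' hW' z hzB
        have h1 := hsep c W hW W' hW' hWW' w hwW w' hw'W'
        have h2 := dist_triangle w z w'
        have h3 : dist w z = dist z w := dist_comm w z
        rw [hr'def] at h1
        linarith
      · rcases hzA with hzW | ⟨A', ⟨hA', w, hwA', hwW⟩, hzA'⟩
        · exact horph' W hW ⟨z, hzB, hzW⟩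
        · by_cases hAB' : A' = B
          · exact horph' W hW (hAB' ▸ ⟨w, hwA', hwW⟩)
          · exact hdisj c A' hA' B hB hAB' z hzA' hzB
    · rcases hB with ⟨W, hW, rfl⟩ | ⟨hB, horph'⟩
      · rcases hzB with hzW | ⟨A', ⟨hA', w, hwA', hwW⟩, hzA'⟩
        · exact horph W hW ⟨z, hzA, hzW⟩
        · by_cases hAB' : A' = A
          · exact horph W hW (hAB' ▸ ⟨w, hwA', hwW⟩)
          · exact hdisj c A' hA' A hA hAB' z hzA' hzA
      · exact hdisj c A hA B hB hAB z hzA hzB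
  · -- bounded
    rintro c A hA a ha b hb
    show dist a b ≤ M0 + 3 * s.M
    rcases hA with ⟨W, hW, rfl⟩ | ⟨hA, _⟩
    · obtain ⟨w, hwW, haw⟩ := near c W hW a ha
      obtain ⟨w', hw'W, hbw⟩ := near c W hW b hb
      have hww' : dist w w' ≤ M0 := hVbdd c W hW w hwW w' hw'W
      have h4 := dist_triangle4 a w w' b
      have h5 : dist w' b = dist b w' := dist_comm _ _
      linarith
    · have := hbdd c A hA a ha b hb
      linarith
  · -- thickness
    intro x y hxy
    obtain ⟨c, W, hW, hxW, hyW⟩ := hVthick x y hxy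
    exact ⟨c, _, Or.inl ⟨W, hW, rfl⟩, Or.inl hxW, Or.inl hyW⟩
  · -- nesting
    intro c A hA
    by_cases hm : ∃ W ∈ V c, (A ∩ W).Nonempty
    · obtain ⟨W, hW, hne⟩ := hm
      refine ⟨W ∪ ⋃₀ {A' | A' ∈ s.G c ∧ (A' ∩ W).Nonempty}, Or.inl ⟨W, hW, rfl⟩, ?_⟩
      intro a ha
      exact Or.inr ⟨A, ⟨hA, hne⟩, ha⟩
    · exact ⟨A, Or.inr ⟨hA, fun W hW hne => hm ⟨W, hW, hne⟩⟩, subset_rfl⟩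

lemma tower_exists {X : Type*} [MetricSpace X] {n : ℕ} (h : AsdimLE n X) :
    ∃ T : ℕ → TowerLvl X n, (∀ q, TowerInv (T q)) ∧ (∀ q, TowerLink (T q) (T (q + 1))) ∧
      ∀ q : ℕ, (q : ℝ) + 1 ≤ (T q).r := by
  obtain ⟨V, M0, hM0, hsep, hVbdd, hVthick⟩ := aux_thick h (r := 1) one_pos
  set L0 : TowerLvl X n := ⟨V, 1, M0⟩ with hL0
  have hInv0 : TowerInv L0 := by
    refine ⟨one_pos, hM0, ?_, hVbdd, hVthick⟩
    intro c A hA B hB hAB z hzA hzB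
    have := hsep c A hA B hB hAB z hzA z hzB
    simp at this; linarith
  have hstep' : ∀ s : TowerLvl X n, ∃ t, TowerInv s → TowerInv t ∧ TowerLink s t := by
    intro s
    by_cases hs : TowerInv s
    · obtain ⟨t, h1, h2⟩ := tower_step h s hs
      exact ⟨t, fun _ => ⟨h1, h2⟩⟩
    · exact ⟨s, fun hs' => absurd hs' hs⟩
  choose F hF using hstep'
  set T : ℕ → TowerLvl X n := fun q => Nat.rec L0 (fun _ ih => F ih) q with hT
  have hinv : ∀ q, TowerInv (T q) := by
    intro q
    induction q with
    | zero => exact hInv0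
    | succ q ih => exact (hF (T q) ih).1
  have hlink : ∀ q, TowerLink (T q) (T (q + 1)) := fun q => (hF (T q) (hinv q)).2
  refine ⟨T, hinv, hlink, ?_⟩
  intro q
  induction q with
  | zero => simp [hT, hL0]
  | succ q ih =>
    have := (hlink q).2.2.2
    push_cast
    linarith

/-- If `asdim(X, d) ≤ n`, then there is a metric `D` on the set `X` such that `(X, D)`
satisfies property `(N2)_n` and the identity map `(X, d) → (X, D)` is a coarse
equivalence. -/
theorem exists_N2_metric_coarse_equiv_id {X : Type*} [MetricSpace X] (n : ℕ)
    (h : AsdimLE n X) :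
    ∃ D : X → X → ℝ,
      (∀ x y : X, 0 ≤ D x y) ∧
      (∀ x y : X, D x y = D y x) ∧
      (∀ x y : X, D x y = 0 ↔ x = y) ∧
      (∀ x y z : X, D x y ≤ D x z + D z y) ∧
      N2Prop n D ∧
      CoarseWith (fun x y : X => dist x y) D id ∧
      CoarseWith D (fun x y : X => dist x y) id ∧
      (∃ C : ℝ, 0 < C ∧ (∀ x : X, dist x (id (id x)) ≤ C) ∧
        ∀ x : X, D x (id (id x)) ≤ C) := by
  classical
  obtain ⟨T, hinv, hlink, hgrow⟩ := tower_exists h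
  set G : ℕ → Fin (n + 1) → Set (Set X) := fun q => (T q).G with hG
  have hdisj : ∀ q c, ∀ A ∈ G q c, ∀ B ∈ G q c, A ≠ B → ∀ z, z ∈ A → z ∈ B → False :=
    fun q => (hinv q).2.2.1
  have hbdd : ∀ q c, ∀ A ∈ G q c, ∀ a ∈ A, ∀ b ∈ A, dist a b ≤ (T q).M :=
    fun q => (hinv q).2.2.2.1
  have hthick : ∀ q (x y : X), dist x y ≤ (T q).r → ∃ c, ∃ A ∈ G q c, x ∈ A ∧ y ∈ A :=
    fun q => (hinv q).2.2.2.2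
  have hnest : ∀ q c, ∀ A ∈ G q c, ∃ B ∈ G (q + 1) c, A ⊆ B := fun q => (hlink q).1
  have hMr : ∀ q, 2 * (T q).M < (T (q + 1)).r := fun q => (hlink q).2.1
  have hMmono : Monotone fun q => (T q).M :=
    monotone_nat_of_le_succ fun q => (hlink q).2.2.1
  have hM0 : ∀ q, 0 ≤ (T q).M := fun q => (hinv q).2.1
  -- lifting sets to higher levels within the same colour
  have hlift : ∀ (c : Fin (n + 1)) (p q : ℕ), p ≤ q → ∀ A ∈ G p c, ∃ B ∈ G q c, A ⊆ B := by
    intro c p q hpq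
    induction q, hpq using Nat.le_induction with
    | base => exact fun A hA => ⟨A, hA, subset_rfl⟩
    | succ q hpq ih =>
      intro A hA
      obtain ⟨B, hB, hAB⟩ := ih A hA
      obtain ⟨B', hB', hBB'⟩ := hnest q c B hB
      exact ⟨B', hB', hAB.trans hBB'⟩
  -- every pair of points shares a set at some level
  have hex : ∀ x y : X, ∃ q : ℕ, ∃ c, ∃ A ∈ G q c, x ∈ A ∧ y ∈ A := by
    intro x y
    refine ⟨⌈dist x y⌉₊, hthick _ x y ?_⟩
    have h1 : dist x y ≤ (⌈dist x y⌉₊ : ℝ) := Nat.le_ceil _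
    have h2 := hgrow ⌈dist x y⌉₊
    linarith
  set l : X → X → ℕ := fun x y => Nat.find (hex x y) with hl
  set D : X → X → ℝ := fun x y => if x = y then 0 else (l x y : ℝ) + 1 with hDdef
  have hDxx : ∀ x : X, D x x = 0 := fun x => if_pos rfl
  have hDne : ∀ {x y : X}, x ≠ y → D x y = (l x y : ℝ) + 1 := fun {x y} hxy => if_neg hxy
  have hDnonneg : ∀ x y : X, 0 ≤ D x y := by
    intro x y
    by_cases hxy : x = y
    · rw [hxy, hDxx]
    · rw [hDne hxy]; positivity
  have hl_spec : ∀ x y : X, ∃ c, ∃ A ∈ G (l x y) c, x ∈ A ∧ y ∈ A :=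
    fun x y => Nat.find_spec (hex x y)
  have hl_le : ∀ (x y : X) (q : ℕ), (∃ c, ∃ A ∈ G q c, x ∈ A ∧ y ∈ A) → l x y ≤ q :=
    fun x y q hq => Nat.find_le hq
  have hDle : ∀ (x y : X) (q : ℕ), (∃ c, ∃ A ∈ G q c, x ∈ A ∧ y ∈ A) → D x y ≤ (q : ℝ) + 1 := by
    intro x y q hq
    by_cases hxy : x = y
    · rw [hxy, hDxx]; positivity
    · rw [hDne hxy]
      have h1 : l x y ≤ q := hl_le x y q hq
      have : (l x y : ℝ) ≤ (q : ℝ) := by exact_mod_cast h1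
      linarith
  have hsym : ∀ x y : X, D x y = D y x := by
    intro x y
    by_cases hxy : x = y
    · rw [hxy]
    · have hyx : y ≠ x := fun e => hxy e.symm
      rw [hDne hxy, hDne hyx]
      have h1 : l x y ≤ l y x := by
        obtain ⟨c, A, hA, hy, hx⟩ := hl_spec y x
        exact hl_le x y _ ⟨c, A, hA, hx, hy⟩
      have h2 : l y x ≤ l x y := by
        obtain ⟨c, A, hA, hx, hy⟩ := hl_spec x y
        exact hl_le y x _ ⟨c, A, hA, hy, hx⟩
      rw [le_antisymm h1 h2]
  have hDdist : ∀ {x y : X}, dist x y ≤ (T (l x y)).M := by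
    intro x y
    obtain ⟨c, A, hA, hx, hy⟩ := hl_spec x y
    exact hbdd _ c A hA x hx y hy
  refine ⟨D, hDnonneg, hsym, ?_, ?_, ?_, ?_, ?_, 1, one_pos, by simp, fun x => by
    simp only [id]; rw [hDxx]; linarith⟩
  · -- D x y = 0 ↔ x = y
    intro x y
    constructor
    · intro h0
      by_contra hxy
      rw [hDne hxy] at h0
      have : (0:ℝ) ≤ (l x y : ℝ) := by positivity
      linarith
    · intro e; rw [e, hDxx]
  · -- triangle: D x y ≤ D x z + D z y
    intro x y z
    by_cases hxy : x = y
    · rw [hxy, hDxx]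
      exact add_nonneg (hDnonneg _ _) (hDnonneg _ _)
    by_cases hxz : x = z
    · rw [hxz, hDxx, zero_add]
    by_cases hzy : z = y
    · rw [hzy, hDxx, add_zero]
    rw [hDne hxz, hDne hzy]
    set p := l x z
    set q := l z y
    set Q := max p q with hQ
    have hd1 : dist x z ≤ (T Q).M := le_trans hDdist (hMmono (le_max_left p q))
    have hd2 : dist z y ≤ (T Q).M := le_trans hDdist (hMmono (le_max_right p q))
    have hd : dist x y ≤ (T (Q + 1)).r := by
      have := dist_triangle x z y
      have := hMr Q
      linarith
    have hshare := hthick (Q + 1) x y hd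
    have hDxy : D x y ≤ ((Q + 1 : ℕ) : ℝ) + 1 := hDle x y (Q + 1) hshare
    have hQpq : Q ≤ p + q := max_le (Nat.le_add_right p q) (Nat.le_add_left q p)
    have : ((Q:ℝ)) ≤ (p:ℝ) + (q:ℝ) := by exact_mod_cast hQpq
    push_cast at hDxy
    linarith
  · -- N2 property
    intro x y
    by_contra hcon
    push_neg at hcon
    -- x is distinct from all y i
    have hxne : ∀ i, x ≠ y i := by
      intro i hxi
      obtain ⟨j, hj⟩ := Fintype.exists_ne_of_one_lt_card (by simp) i
      have h1 := hcon j i hj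
      rw [← hxi, hsym (y j) x] at h1
      exact lt_irrefl _ h1
    have hyne : ∀ i j : Fin (n + 2), i ≠ j → y i ≠ y j := by
      intro i j hij e
      have h1 := hcon i j hij
      rw [e, hDxx] at h1
      exact absurd h1 (not_lt.mpr (hDnonneg _ _))
    -- colours at the minimal levels
    have hw : ∀ i : Fin (n + 2), ∃ c, ∃ A ∈ G (l x (y i)) c, x ∈ A ∧ y i ∈ A :=
      fun i => hl_spec x (y i)
    choose c A hA hxA hyA using hw
    obtain ⟨i, j, hij, hcij⟩ :=
      Fintype.exists_ne_map_eq_of_card_lt c (by simp)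
    have key : ∀ i j : Fin (n + 2), i ≠ j → c i = c j → l x (y j) ≤ l x (y i) → False := by
      intro i j hij hcij hle
      obtain ⟨B, hB, hAB⟩ := hlift (c j) (l x (y j)) (l x (y i)) hle (A j) (hA j)
      rw [← hcij] at hB
      have hAiB : A i = B := by
        by_contra hne
        exact hdisj (l x (y i)) (c i) (A i) (hA i) B hB hne x (hxA i) (hAB (hxA j))
      have hyjAi : y j ∈ A i := hAiB ▸ hAB (hyA j)
      have hshare : ∃ cc, ∃ S ∈ G (l x (y i)) cc, y i ∈ S ∧ y j ∈ S :=
        ⟨c i, A i, hA i, hyA i, hyjAi⟩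
      have h1 : D (y i) (y j) ≤ (l x (y i) : ℝ) + 1 := hDle _ _ _ hshare
      have h2 : D x (y i) = (l x (y i) : ℝ) + 1 := hDne (hxne i)
      have h3 := hcon i j hij
      rw [h2] at h3
      linarith
    rcases le_total (l x (y j)) (l x (y i)) with hle | hle
    · exact key i j hij hcij hle
    · exact key j i (Ne.symm hij) hcij.symm hle
  · -- coarse: d → D
    intro δ hδ
    refine ⟨(⌈δ⌉₊ : ℝ) + 1, by positivity, ?_⟩
    intro a b hab
    have hd : dist a b ≤ (T ⌈δ⌉₊).r := by
      have h1 : δ ≤ (⌈δ⌉₊ : ℝ) := Nat.le_ceil _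
      have h2 := hgrow ⌈δ⌉₊
      simp only at hab
      linarith
    exact hDle a b ⌈δ⌉₊ (hthick _ a b hd)
  · -- coarse: D → d
    intro δ hδ
    refine ⟨(T ⌈δ⌉₊).M + 1, by have := hM0 ⌈δ⌉₊; linarith, ?_⟩
    intro a b hab
    by_cases hab' : a = b
    · simp [hab']
      have := hM0 ⌈δ⌉₊; linarith
    · rw [hDne hab'] at hab
      have h1 : (l a b : ℝ) ≤ δ := by linarith
      have h2 : (l a b : ℝ) ≤ (⌈δ⌉₊ : ℝ) := le_trans h1 (Nat.le_ceil _)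
      have h3 : l a b ≤ ⌈δ⌉₊ := by exact_mod_cast h2
      have h4 : dist a b ≤ (T (l a b)).M := hDdist
      have h5 := hMmono h3
      simp only [id]
      linarith
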